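/- Let G be a finite group that is an internal semidirect product G = Γ ⋊ H of a normal cyclic subgroup Γ of order r and a subgroup H. Let τ be a generator of Γ, and let I := Ψ_r(τ)·Z[Γ] ⊆ Z[G] be the set of products Ψ_r(τ)·β with β ∈ Z[Γ] (where Z[Γ] is viewed as a subring of Z[G]). Let N_H := ∑_{h ∈ H} h ∈ Z[G]. Then N_H·I is a right ideal of Z[G], i.e., (N_H·I)·Z[G] = N_H·I, and moreover this right ideal is saturated: the quotient Z[G]/(N_H·I) is torsion-free as an abelian group. -/

import Mathlib

open Polynomial
open Pointwise

noncomputable section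

/-- `Ψ_r(X) := (X^r − 1)/Φ_r(X) ∈ ℤ[X]`. -/
def PsiPoly (r : ℕ) : ℤ[X] := (X ^ r - 1) /ₘ cyclotomic r ℤ

/-- The norm element `N_H := ∑_{h ∈ H} h` of a subgroup `H`, in the group
ring `ℤ[G]`. -/
def normElt {G : Type*} [Group G] (H : Subgroup G) : MonoidAlgebra ℤ G :=
  ∑ᶠ h ∈ (H : Set G), MonoidAlgebra.of ℤ G h

lemma psi_mul_cyclo {r : ℕ} (hr : 0 < r) :
    PsiPoly r * cyclotomic r ℤ = X ^ r - 1 := by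
  have h := modByMonic_add_div (X ^ r - 1 : ℤ[X]) (cyclotomic r ℤ)
  have h2 : (X ^ r - 1 : ℤ[X]) %ₘ cyclotomic r ℤ = 0 :=
    (modByMonic_eq_zero_iff_dvd (cyclotomic.monic r ℤ)).2 (cyclotomic.dvd_X_pow_sub_one r ℤ)
  rw [h2, zero_add] at h
  rw [PsiPoly, mul_comm]
  exact h

lemma X_pow_sub_one_monic {r : ℕ} (hr : 0 < r) : (X ^ r - 1 : ℤ[X]).Monic := by
  have := monic_X_pow_sub_C (1 : ℤ) hr.ne'
  simpa using this

lemma psi_monic {r : ℕ} (hr : 0 < r) : (PsiPoly r).Monic :=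
  Monic.of_mul_monic_right (cyclotomic.monic r ℤ) (by rw [psi_mul_cyclo hr]; exact X_pow_sub_one_monic hr)

lemma psi_eq_prod {r : ℕ} (hr : 0 < r) :
    PsiPoly r = ∏ d ∈ r.properDivisors, cyclotomic d ℤ := by
  have h1 : (∏ d ∈ r.divisors, cyclotomic d ℤ) = X ^ r - 1 :=
    prod_cyclotomic_eq_X_pow_sub_one hr ℤ
  rw [← Nat.insert_self_properDivisors hr.ne', Finset.prod_insert Nat.self_notMem_properDivisors] at h1
  have h2 : PsiPoly r * cyclotomic r ℤ = (∏ d ∈ r.properDivisors, cyclotomic d ℤ) * cyclotomic r ℤ := by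
    rw [psi_mul_cyclo hr, ← h1, mul_comm]
  exact mul_right_cancel₀ (cyclotomic.monic r ℤ).ne_zero h2

lemma cyclo_dvd_cyclo_comp {d k : ℕ} (hd : 0 < d) (hk : Nat.Coprime k d) :
    cyclotomic d ℤ ∣ (cyclotomic d ℤ).comp (X ^ k) := by
  have hprim : IsPrimitiveRoot (Complex.exp (2 * Real.pi * Complex.I / d)) d :=
    Complex.isPrimitiveRoot_exp d hd.ne'
  set ζ := Complex.exp (2 * Real.pi * Complex.I / d)
  have hmin : cyclotomic d ℤ = minpoly ℤ ζ := cyclotomic_eq_minpoly hprim hd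
  have hζk : IsPrimitiveRoot (ζ ^ k) d := hprim.pow_of_coprime k hk
  haveI : NeZero ((d : ℕ) : ℂ) := ⟨by exact_mod_cast hd.ne'⟩
  have hroot : aeval (ζ ^ k) (cyclotomic d ℤ) = 0 := by
    rw [aeval_def, eval₂_eq_eval_map, map_cyclotomic]
    exact (isRoot_cyclotomic_iff.2 hζk)
  have haeval : aeval ζ ((cyclotomic d ℤ).comp (X ^ k)) = 0 := by
    rw [aeval_comp]
    simpa using hroot
  rw [hmin] at haeval ⊢
  exact minpoly.isIntegrallyClosed_dvd (hprim.isIntegral hd) haeval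

lemma psi_dvd_psi_comp {r k : ℕ} (hr : 0 < r) (hk : Nat.Coprime k r) :
    PsiPoly r ∣ (PsiPoly r).comp (X ^ k) := by
  rw [psi_eq_prod hr, Polynomial.prod_comp]
  exact Finset.prod_dvd_prod_of_dvd _ _ fun d hd => by
    have hd' := Nat.pos_of_mem_properDivisors hd
    exact cyclo_dvd_cyclo_comp hd' (Nat.Coprime.coprime_dvd_right ((Nat.mem_properDivisors.1 hd).1) hk)

lemma psi_dvd_of_int_mul {r : ℕ} (hr : 0 < r) {n : ℤ} (hn : n ≠ 0) {p : ℤ[X]}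
    (h : PsiPoly r ∣ C n * p) : PsiPoly r ∣ p := by
  obtain ⟨q, hq⟩ := h
  have hQ : (PsiPoly r).map (Int.castRingHom ℚ) ∣ p.map (Int.castRingHom ℚ) := by
    refine ⟨C ((n : ℚ)⁻¹) * q.map (Int.castRingHom ℚ), ?_⟩
    have := congrArg (fun t => C ((n : ℚ)⁻¹) * Polynomial.map (Int.castRingHom ℚ) t) hq
    simp only [Polynomial.map_mul, map_C] at this
    have hn' : ((n : ℚ))⁻¹ * (n : ℚ) = 1 := inv_mul_cancel₀ (by exact_mod_cast hn)
    calc p.map (Int.castRingHom ℚ)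
        = C ((n : ℚ)⁻¹) * (C (((Int.castRingHom ℚ) n)) * p.map (Int.castRingHom ℚ)) := by
          rw [← mul_assoc, ← C_mul]
          simp only [eq_intCast, Int.cast_id] at *
          rw [hn', C_1, one_mul]
      _ = C ((n : ℚ)⁻¹) * ((PsiPoly r).map (Int.castRingHom ℚ) * q.map (Int.castRingHom ℚ)) := by
          rw [this]
      _ = (PsiPoly r).map (Int.castRingHom ℚ) * (C ((n : ℚ)⁻¹) * q.map (Int.castRingHom ℚ)) := by
          ring
  exact (map_dvd_map (Int.castRingHom ℚ) (fun a b hab => by simpa using hab) (psi_monic hr)).1 hQ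


section Cyc
variable {K : Type*} [Group K] [Finite K] (t : K)

lemma aeval_of_apply_pow {s : ℤ[X]} (hs : s.natDegree < orderOf t) {j : ℕ} (hj : j < orderOf t) :
    (Polynomial.aeval (MonoidAlgebra.of ℤ K t) s).coeff (t ^ j) = s.coeff j := by
  classical
  rw [Polynomial.aeval_eq_sum_range, MonoidAlgebra.coeff_sum, Finset.sum_apply']
  have hterm : ∀ i ∈ Finset.range (s.natDegree + 1),
      (s.coeff i • (MonoidAlgebra.of ℤ K t) ^ i).coeff (t ^ j) = if i = j then s.coeff i else 0 := by
    intro i hi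
    have hi' : i < orderOf t := by
      have := Finset.mem_range.1 hi; omega
    rw [← map_pow, MonoidAlgebra.of_apply, MonoidAlgebra.coeff_smul, Finsupp.smul_apply,
      MonoidAlgebra.coeff_single, Finsupp.single_apply]
    by_cases h : i = j
    · subst h; simp
    · have hne : ¬ t ^ i = t ^ j := fun he =>
        h (pow_injOn_Iio_orderOf (Set.mem_Iio.2 hi') (Set.mem_Iio.2 hj) he)
      simp [hne, h]
  rw [Finset.sum_congr rfl hterm, Finset.sum_ite_eq' (Finset.range (s.natDegree + 1)) j]
  by_cases hj2 : j ∈ Finset.range (s.natDegree + 1)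
  · simp [hj2]
  · rw [if_neg hj2, eq_comm, Polynomial.coeff_eq_zero_of_natDegree_lt]
    rw [Finset.mem_range] at hj2
    omega

lemma aeval_of_ker {p : ℤ[X]} (hp : Polynomial.aeval (MonoidAlgebra.of ℤ K t) p = 0) :
    (X ^ orderOf t - 1 : ℤ[X]) ∣ p := by
  have hr : 0 < orderOf t := orderOf_pos t
  have hmon : (X ^ orderOf t - 1 : ℤ[X]).Monic := by
    have := monic_X_pow_sub_C (1 : ℤ) hr.ne'
    simpa using this
  rw [← modByMonic_eq_zero_iff_dvd hmon]
  set s := p %ₘ (X ^ orderOf t - 1) with hsdef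
  have hps : s + (X ^ orderOf t - 1) * (p /ₘ (X ^ orderOf t - 1)) = p :=
    modByMonic_add_div p (X ^ orderOf t - 1)
  have haevalX : Polynomial.aeval (MonoidAlgebra.of ℤ K t) (X ^ orderOf t - 1 : ℤ[X]) = 0 := by
    rw [map_sub, map_one, map_pow, aeval_X, ← map_pow, pow_orderOf_eq_one, map_one, sub_self]
  have hs0 : Polynomial.aeval (MonoidAlgebra.of ℤ K t) s = 0 := by
    have := congrArg (Polynomial.aeval (MonoidAlgebra.of ℤ K t)) hps
    rw [map_add, map_mul, haevalX, zero_mul, add_zero, hp] at this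
    exact this
  have hdeg : s.natDegree < orderOf t := by
    by_cases h0 : s = 0
    · simpa [h0] using hr
    · have hlt := degree_modByMonic_lt p hmon
      have hdX : (X ^ orderOf t - 1 : ℤ[X]).degree = (orderOf t : ℕ) := by
        simpa using degree_X_pow_sub_C hr (1 : ℤ)
      rw [hdX] at hlt
      exact (natDegree_lt_iff_degree_lt h0).2 hlt
  have : s = 0 := by
    apply Polynomial.ext
    intro j
    by_cases hj : j < orderOf t
    · rw [← aeval_of_apply_pow t hdeg hj, hs0]; simp
    · rw [Polynomial.coeff_eq_zero_of_natDegree_lt (by omega : s.natDegree < j)]; simp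
  exact this

lemma aeval_of_surj (hgen : ∀ γ : K, ∃ m : ℕ, t ^ m = γ) (x : MonoidAlgebra ℤ K) :
    ∃ p : ℤ[X], Polynomial.aeval (MonoidAlgebra.of ℤ K t) p = x := by
  induction x using MonoidAlgebra.induction with
  | zero => exact ⟨0, by simp⟩
  | single_add γ b f _ _ ih =>
    obtain ⟨p, hp⟩ := ih
    obtain ⟨m, hm⟩ := hgen γ
    refine ⟨C b * X ^ m + p, ?_⟩
    rw [map_add, hp, map_mul, aeval_C, map_pow, aeval_X, ← map_pow, hm]
    congr 1
    rw [MonoidAlgebra.coe_algebraMap]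
    show MonoidAlgebra.single (1 : K) ((algebraMap ℤ ℤ) b) * MonoidAlgebra.single γ 1
      = MonoidAlgebra.single γ b
    rw [MonoidAlgebra.single_mul_single, one_mul, mul_one]
    rfl

lemma aeval_sat (hgen : ∀ γ : K, ∃ m : ℕ, t ^ m = γ) {n : ℤ} (hn : n ≠ 0)
    (x β : MonoidAlgebra ℤ K)
    (h : n • x = Polynomial.aeval (MonoidAlgebra.of ℤ K t) (PsiPoly (orderOf t)) * β) :
    ∃ β', x = Polynomial.aeval (MonoidAlgebra.of ℤ K t) (PsiPoly (orderOf t)) * β' := by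
  have hr : 0 < orderOf t := orderOf_pos t
  obtain ⟨p, hp⟩ := aeval_of_surj t hgen x
  obtain ⟨q, hq⟩ := aeval_of_surj t hgen β
  have hker : Polynomial.aeval (MonoidAlgebra.of ℤ K t)
      (C n * p - PsiPoly (orderOf t) * q) = 0 := by
    rw [map_sub, map_mul, map_mul, aeval_C, hp, hq]
    have : (algebraMap ℤ (MonoidAlgebra ℤ K)) n * x = n • x := by
      exact (Algebra.smul_def n x).symm
    rw [this, h, sub_self]
  obtain ⟨w, hw⟩ := aeval_of_ker t hker
  have hfac : C n * p = PsiPoly (orderOf t) * (q + cyclotomic (orderOf t) ℤ * w) := by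
    have hXr : (X ^ orderOf t - 1 : ℤ[X]) = PsiPoly (orderOf t) * cyclotomic (orderOf t) ℤ :=
      (psi_mul_cyclo hr).symm
    rw [hXr] at hw
    linear_combination hw
  have hdvd : PsiPoly (orderOf t) ∣ p := psi_dvd_of_int_mul hr hn ⟨_, hfac⟩
  obtain ⟨p', hp'⟩ := hdvd
  refine ⟨Polynomial.aeval (MonoidAlgebra.of ℤ K t) p', ?_⟩
  rw [← hp, hp', map_mul]

end Cyc

section Grp
variable {G : Type*} [Group G] [Finite G]

/-- The inclusion `ℤ[Γ] → ℤ[G]`. -/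
def phiH (Γ : Subgroup G) : MonoidAlgebra ℤ Γ →+* MonoidAlgebra ℤ G :=
  MonoidAlgebra.mapDomainRingHom ℤ Γ.subtype

/-- Conjugation by `g` on `ℤ[Γ]`. -/
def DD (Γ : Subgroup G) [Γ.Normal] (g : G) : MonoidAlgebra ℤ Γ →+* MonoidAlgebra ℤ Γ :=
  MonoidAlgebra.mapDomainRingHom ℤ (MulAut.conjNormal g : MulAut Γ).toMonoidHom

lemma phiH_single (Γ : Subgroup G) (γ : Γ) (b : ℤ) :
    phiH Γ (MonoidAlgebra.single γ b) = MonoidAlgebra.single (γ : G) b := by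
  simp [phiH, MonoidAlgebra.mapDomainRingHom_apply, Finsupp.mapDomain_single]

lemma phiH_of (Γ : Subgroup G) (γ : Γ) :
    phiH Γ (MonoidAlgebra.of ℤ Γ γ) = MonoidAlgebra.of ℤ G (γ : G) := by
  simp [MonoidAlgebra.of_apply, phiH_single]

lemma DD_single (Γ : Subgroup G) [Γ.Normal] (g : G) (γ : Γ) (b : ℤ) :
    DD Γ g (MonoidAlgebra.single γ b) = MonoidAlgebra.single (MulAut.conjNormal g γ) b := by
  simp [DD, MonoidAlgebra.mapDomainRingHom_apply, Finsupp.mapDomain_single]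

lemma DD_one (Γ : Subgroup G) [Γ.Normal] (x : MonoidAlgebra ℤ Γ) : DD Γ (1 : G) x = x := by
  show MonoidAlgebra.mapDomain _ x = x
  have : ⇑(MulAut.conjNormal (1 : G) : MulAut Γ).toMonoidHom = id := by
    funext γ
    exact Subtype.ext (by simp)
  rw [this]
  ext
  simp [MonoidAlgebra.mapDomain, Finsupp.mapDomain_id]

lemma of_mul_phiH (Γ : Subgroup G) [Γ.Normal] (g : G) (x : MonoidAlgebra ℤ Γ) :
    MonoidAlgebra.of ℤ G g * phiH Γ x = phiH Γ (DD Γ g x) * MonoidAlgebra.of ℤ G g := by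
  induction x using MonoidAlgebra.induction_linear with
  | zero => simp
  | add a b ha hb => rw [map_add, map_add, map_add, mul_add, add_mul, ha, hb]
  | single γ b =>
    rw [phiH_single, DD_single, phiH_single, MonoidAlgebra.of_apply,
      MonoidAlgebra.single_mul_single, MonoidAlgebra.single_mul_single]
    simp [mul_assoc]

lemma phiH_mul_of (Γ : Subgroup G) [Γ.Normal] (g : G) (x : MonoidAlgebra ℤ Γ) :
    phiH Γ x * MonoidAlgebra.of ℤ G g = MonoidAlgebra.of ℤ G g * phiH Γ (DD Γ g⁻¹ x) := by
  have h := of_mul_phiH Γ g⁻¹ x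
  have e1 : MonoidAlgebra.of ℤ G g * MonoidAlgebra.of ℤ G g⁻¹ = 1 := by
    rw [← map_mul]; simp [MonoidAlgebra.one_def]
  have e2 : MonoidAlgebra.of ℤ G g⁻¹ * MonoidAlgebra.of ℤ G g = 1 := by
    rw [← map_mul]; simp [MonoidAlgebra.one_def]
  calc phiH Γ x * MonoidAlgebra.of ℤ G g
      = MonoidAlgebra.of ℤ G g * ((MonoidAlgebra.of ℤ G g⁻¹ * phiH Γ x)
          * MonoidAlgebra.of ℤ G g) := by
        rw [← mul_assoc, ← mul_assoc, e1, one_mul]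
    _ = MonoidAlgebra.of ℤ G g * ((phiH Γ (DD Γ g⁻¹ x) * MonoidAlgebra.of ℤ G g⁻¹)
          * MonoidAlgebra.of ℤ G g) := by rw [h]
    _ = MonoidAlgebra.of ℤ G g * phiH Γ (DD Γ g⁻¹ x) := by
        rw [mul_assoc (phiH Γ (DD Γ g⁻¹ x)), e2, mul_one]

/-- The projection `ℤ[G] → ℤ[Γ]`. -/
def piH (Γ : Subgroup G) : MonoidAlgebra ℤ G →ₗ[ℤ] MonoidAlgebra ℤ Γ :=
  (MonoidAlgebra.comapDomainAddMonoidHom (R := ℤ) (Γ.subtype : Γ → G) Subtype.coe_injective).toIntLinearMap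

lemma piH_apply (Γ : Subgroup G) (a : MonoidAlgebra ℤ G) (γ : Γ) :
    (piH Γ a).coeff γ = a.coeff (γ : G) := rfl

lemma piH_phiH (Γ : Subgroup G) (x : MonoidAlgebra ℤ Γ) : piH Γ (phiH Γ x) = x := by
  ext γ
  rw [piH_apply]
  exact Finsupp.mapDomain_apply Subtype.coe_injective x.coeff γ

lemma phiH_piH_apply (Γ : Subgroup G) (a : MonoidAlgebra ℤ G) (z : G) (hz : z ∈ Γ) :
    (phiH Γ (piH Γ a)).coeff z = a.coeff z := by
  exact Finsupp.mapDomain_apply Subtype.coe_injective (piH Γ a).coeff ⟨z, hz⟩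

lemma phiH_apply_notmem (Γ : Subgroup G) (x : MonoidAlgebra ℤ Γ) (z : G) (hz : z ∉ Γ) :
    (phiH Γ x).coeff z = 0 := by
  rw [show (phiH Γ x).coeff = Finsupp.mapDomain (Γ.subtype : Γ → G) x.coeff from rfl]
  refine Finsupp.mapDomain_notin_range _ _ ?_
  rintro ⟨γ, rfl⟩
  exact hz γ.2

lemma piH_phiH_mul_of (Γ : Subgroup G) (x : MonoidAlgebra ℤ Γ) (g : G) (hg : g ∉ Γ) :
    piH Γ (phiH Γ x * MonoidAlgebra.of ℤ G g) = 0 := by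
  ext γ
  rw [piH_apply, MonoidAlgebra.of_apply, MonoidAlgebra.coeff_mul_single_apply, mul_one]
  rw [phiH_apply_notmem Γ x _ (fun hmem => ?_)]
  · rfl
  · exact hg (by
      have h2 : ((γ : G) * g⁻¹)⁻¹ * (γ : G) ∈ Γ := mul_mem (inv_mem hmem) γ.2
      simpa [mul_assoc] using h2)

end Grp
section NormSec
variable {G : Type*} [Group G] [Finite G]

lemma normElt_eq_sum (H : Subgroup G) :
    normElt H = ∑ h ∈ (Set.toFinite (H : Set G)).toFinset, MonoidAlgebra.of ℤ G h := by
  rw [normElt, ← finsum_mem_coe_finset, Set.Finite.coe_toFinset]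

lemma normElt_absorb (H : Subgroup G) {h : G} (hh : h ∈ H) :
    normElt H * MonoidAlgebra.of ℤ G h = normElt H := by
  rw [normElt_eq_sum, Finset.sum_mul]
  refine Finset.sum_equiv (Equiv.mulRight h) ?_ ?_
  · intro i
    simp only [Set.Finite.mem_toFinset, SetLike.mem_coe, Equiv.coe_mulRight]
    exact (mul_mem_cancel_right hh).symm
  · intro i _
    rw [← map_mul]
    rfl

/-- Reconstruction of an element of `ℤ[G]` from its `Γ`-coset coordinates. -/
lemma recon (Γ H : Subgroup G) [Γ.Normal] (hinf : Γ ⊓ H = ⊥) (hsup : Γ ⊔ H = ⊤)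
    (a : MonoidAlgebra ℤ G) :
    a = ∑ h ∈ (Set.toFinite (H : Set G)).toFinset,
      phiH Γ (piH Γ (a * MonoidAlgebra.of ℤ G h⁻¹)) * MonoidAlgebra.of ℤ G h := by
  classical
  ext g
  rw [MonoidAlgebra.coeff_sum, Finset.sum_apply']
  have hterm : ∀ h ∈ (Set.toFinite (H : Set G)).toFinset,
      (phiH Γ (piH Γ (a * MonoidAlgebra.of ℤ G h⁻¹)) * MonoidAlgebra.of ℤ G h).coeff g
        = if g * h⁻¹ ∈ Γ then a.coeff g else 0 := by
    intro h _
    simp only [MonoidAlgebra.of_apply]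
    rw [MonoidAlgebra.coeff_mul_single_apply, mul_one]
    by_cases hgh : g * h⁻¹ ∈ Γ
    · rw [if_pos hgh, phiH_piH_apply Γ _ _ hgh,
        MonoidAlgebra.coeff_mul_single_apply, mul_one, inv_inv, inv_mul_cancel_right]
    · rw [if_neg hgh, phiH_apply_notmem Γ _ _ hgh]
  rw [Finset.sum_congr rfl hterm]
  have hg : g ∈ (Γ : Set G) * (H : Set G) := by
    rw [← Subgroup.normal_mul, hsup]
    trivial
  obtain ⟨γ₀, hγ₀, h₀, hh₀, rfl⟩ := hg
  rw [Finset.sum_eq_single_of_mem h₀ (by simpa using hh₀)]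
  · rw [if_pos (by simpa using hγ₀)]
  · intro h hmem hne
    rw [if_neg]
    intro hcon
    have h1 : γ₀ * (h₀ * h⁻¹) ∈ Γ := by rwa [← mul_assoc]
    have h2 : h₀ * h⁻¹ ∈ Γ := by
      have := mul_mem (inv_mem hγ₀) h1
      rwa [inv_mul_cancel_left] at this
    have h3 : h₀ * h⁻¹ ∈ H := mul_mem hh₀ (inv_mem (by simpa using hmem))
    have h4 : h₀ * h⁻¹ ∈ Γ ⊓ H := ⟨h2, h3⟩
    rw [hinf, Subgroup.mem_bot] at h4
    have : h₀ = h := by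
      have := congrArg (· * h) h4
      simpa [inv_mul_cancel_right] using this
    exact hne this.symm

end NormSec

section ConjSec
variable {G : Type*} [Group G] [Finite G]

lemma pow_toNat_emod (t : G) (z : ℤ) : t ^ ((z % (orderOf t : ℤ)).toNat) = t ^ z := by
  have hr : 0 < orderOf t := orderOf_pos t
  rw [← zpow_natCast, Int.toNat_of_nonneg (Int.emod_nonneg z (by exact_mod_cast hr.ne')),
    zpow_mod_orderOf]

lemma conjPowLemma (Γ : Subgroup G) [Γ.Normal] (τ g : G) (hτ : Subgroup.zpowers τ = Γ) :
    ∃ k : ℕ, 0 < k ∧ Nat.Coprime k (orderOf τ) ∧ g * τ * g⁻¹ = τ ^ k := by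
  have hr : 0 < orderOf τ := orderOf_pos τ
  have hmem : g * τ * g⁻¹ ∈ Subgroup.zpowers τ := by
    rw [hτ]
    exact Subgroup.Normal.conj_mem ‹Γ.Normal› τ (hτ ▸ Subgroup.mem_zpowers τ) g
  obtain ⟨z, hz⟩ := Subgroup.mem_zpowers_iff.mp hmem
  have horder : orderOf (g * τ * g⁻¹) = orderOf τ := by
    have h : g * τ * g⁻¹ = (MulAut.conj g).toMonoidHom τ := by
      simp [MulAut.conj_apply]
    rw [h, orderOf_injective (MulAut.conj g).toMonoidHom (MulAut.conj g).injective τ]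
  set k0 := (z % (orderOf τ : ℤ)).toNat with hk0def
  have hk0 : τ ^ k0 = g * τ * g⁻¹ := by rw [pow_toNat_emod, hz]
  by_cases h0 : k0 = 0
  · have h1 : g * τ * g⁻¹ = 1 := by rw [← hk0, h0, pow_zero]
    have hτ1 : orderOf τ = 1 := by rw [← horder, h1, orderOf_one]
    have hτ' : τ = 1 := orderOf_eq_one_iff.mp hτ1
    exact ⟨1, one_pos, by simp [hτ1], by simp [hτ']⟩
  · refine ⟨k0, Nat.pos_of_ne_zero h0, ?_, hk0.symm⟩
    have h2 : orderOf (τ ^ k0) = orderOf τ := by rw [hk0, horder]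
    rw [orderOf_pow] at h2
    have h3 := Nat.div_eq_self.mp h2
    rcases h3 with h | h
    · omega
    · exact Nat.coprime_comm.mp h

lemma DD_psi (Γ : Subgroup G) [Γ.Normal] (τ : G) (hτmem : τ ∈ Γ) (g : G)
    (hτ : Subgroup.zpowers τ = Γ) :
    ∃ m : MonoidAlgebra ℤ Γ,
      DD Γ g (Polynomial.aeval (MonoidAlgebra.of ℤ Γ (⟨τ, hτmem⟩ : Γ)) (PsiPoly (orderOf τ)))
        = Polynomial.aeval (MonoidAlgebra.of ℤ Γ (⟨τ, hτmem⟩ : Γ)) (PsiPoly (orderOf τ)) * m := by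
  have hr : 0 < orderOf τ := orderOf_pos τ
  set τΓ : Γ := ⟨τ, hτmem⟩
  obtain ⟨k, hk, hcop, hconj⟩ := conjPowLemma Γ τ g hτ
  have hconjΓ : (MulAut.conjNormal g) τΓ = τΓ ^ k := by
    ext
    rw [MulAut.conjNormal_apply]
    simpa using hconj
  have h1 : DD Γ g (Polynomial.aeval (MonoidAlgebra.of ℤ Γ τΓ) (PsiPoly (orderOf τ)))
      = Polynomial.aeval (DD Γ g (MonoidAlgebra.of ℤ Γ τΓ)) (PsiPoly (orderOf τ)) :=
    (Polynomial.aeval_algHom_apply (DD Γ g).toIntAlgHom (MonoidAlgebra.of ℤ Γ τΓ)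
      (PsiPoly (orderOf τ))).symm
  have h2 : DD Γ g (MonoidAlgebra.of ℤ Γ τΓ) = (MonoidAlgebra.of ℤ Γ τΓ) ^ k := by
    rw [← map_pow, MonoidAlgebra.of_apply, MonoidAlgebra.of_apply]
    rw [DD_single, hconjΓ]
  have h3 : Polynomial.aeval ((MonoidAlgebra.of ℤ Γ τΓ) ^ k) (PsiPoly (orderOf τ))
      = Polynomial.aeval (MonoidAlgebra.of ℤ Γ τΓ) ((PsiPoly (orderOf τ)).comp (X ^ k)) := by
    rw [Polynomial.aeval_comp]
    simp
  obtain ⟨m, hm⟩ := psi_dvd_psi_comp hr hcop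
  refine ⟨Polynomial.aeval (MonoidAlgebra.of ℤ Γ τΓ) m, ?_⟩
  rw [h1, h2, h3, hm, map_mul]

end ConjSec

/-- Let `G = Γ ⋊ H` be an internal semidirect product of a
normal cyclic subgroup `Γ` of order `r` (with generator `τ`) by a subgroup
`H`.  Let `I := Ψ_r(τ)·ℤ[Γ] ⊆ ℤ[G]` and `N_H := ∑_{h ∈ H} h`.  Then
`N_H·I` is a right ideal of `ℤ[G]`, i.e. `(N_H·I)·ℤ[G] = N_H·I`, and this
right ideal is saturated: `ℤ[G]/(N_H·I)` is torsion-free. -/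
theorem stmt_15 (G : Type*) [Group G] [Finite G] (Γ H : Subgroup G)
    [Γ.Normal] (r : ℕ) (hΓcard : Nat.card Γ = r)
    (τ : G) (hτ : Subgroup.zpowers τ = Γ)
    (hinf : Γ ⊓ H = ⊥) (hsup : Γ ⊔ H = ⊤) :
    let ZΓ : Set (MonoidAlgebra ℤ G) :=
      Set.range (MonoidAlgebra.mapDomainRingHom ℤ Γ.subtype)
    let ψτ : MonoidAlgebra ℤ G :=
      Polynomial.aeval (MonoidAlgebra.of ℤ G τ) (PsiPoly r)
    let I : Set (MonoidAlgebra ℤ G) := (fun β => ψτ * β) '' ZΓ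
    let J : Set (MonoidAlgebra ℤ G) := (fun x => normElt H * x) '' I
    ({z : MonoidAlgebra ℤ G | ∃ x ∈ J, ∃ a : MonoidAlgebra ℤ G, z = x * a} = J) ∧
    NoZeroSMulDivisors ℤ (MonoidAlgebra ℤ G ⧸ Submodule.span ℤ J) := by
  intro ZΓ ψτ I J
  classical
  have hrpos : 0 < r := by rw [← hΓcard]; exact Nat.card_pos
  have hτmem : τ ∈ Γ := hτ ▸ Subgroup.mem_zpowers τ
  set τΓ : Γ := ⟨τ, hτmem⟩ with hτΓdef
  have horderτ : orderOf τ = r := by rw [← Nat.card_zpowers τ, hτ, hΓcard]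
  have horderτΓ : orderOf τΓ = r := by
    rw [← horderτ]
    exact (orderOf_injective Γ.subtype Γ.subtype_injective τΓ).symm
  have hgen : ∀ γ : Γ, ∃ m : ℕ, τΓ ^ m = γ := by
    intro γ
    have hγ : (γ : G) ∈ Subgroup.zpowers τ := by rw [hτ]; exact γ.2
    obtain ⟨z, hz⟩ := Subgroup.mem_zpowers_iff.mp hγ
    refine ⟨(z % (orderOf τ : ℤ)).toNat, ?_⟩
    ext
    rw [SubmonoidClass.coe_pow]
    show τ ^ (z % (orderOf τ : ℤ)).toNat = (γ : G)
    rw [pow_toNat_emod, hz]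
  set ψbar : MonoidAlgebra ℤ Γ :=
    Polynomial.aeval (MonoidAlgebra.of ℤ Γ τΓ) (PsiPoly r) with hψbar
  have hφψ : phiH Γ ψbar = ψτ := by
    have h := (Polynomial.aeval_algHom_apply (phiH Γ).toIntAlgHom
      (MonoidAlgebra.of ℤ Γ τΓ) (PsiPoly r)).symm
    rw [RingHom.toIntAlgHom_coe] at h
    show phiH Γ (Polynomial.aeval (MonoidAlgebra.of ℤ Γ τΓ) (PsiPoly r))
      = Polynomial.aeval (MonoidAlgebra.of ℤ G τ) (PsiPoly r)
    rw [h, phiH_of]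
    rfl
  set Hfin := (Set.toFinite (H : Set G)).toFinset with hHfindef
  have hHfin : ∀ x : G, x ∈ Hfin ↔ x ∈ H := by
    intro x; rw [hHfindef, Set.Finite.mem_toFinset]; rfl
  -- The linear map whose range is `J`.
  set L : MonoidAlgebra ℤ Γ →ₗ[ℤ] MonoidAlgebra ℤ G :=
    { toFun := fun β => normElt H * (ψτ * phiH Γ β)
      map_add' := by intro a b; simp only [map_add, mul_add]
      map_smul' := by
        intro c a
        simp only [RingHom.id_apply, map_zsmul, mul_smul_comm] } with hLdef
  have hL : ∀ β, L β = normElt H * (ψτ * phiH Γ β) := fun _ => rfl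
  have e0 : ∀ β, ψτ * phiH Γ β = phiH Γ (ψbar * β) := by
    intro β; rw [map_mul, hφψ]
  have hJL : J = Set.range L := by
    ext x
    constructor
    · rintro ⟨y, ⟨zz, ⟨β, rfl⟩, rfl⟩, rfl⟩
      exact ⟨β, rfl⟩
    · rintro ⟨β, rfl⟩
      exact ⟨ψτ * phiH Γ β, ⟨phiH Γ β, ⟨β, rfl⟩, rfl⟩, rfl⟩
  have hDpsi : ∀ g : G, ∃ m, DD Γ g ψbar = ψbar * m := by
    intro g
    have h := DD_psi Γ τ hτmem g hτ
    rwa [horderτ] at h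
  have hstep : ∀ (β : MonoidAlgebra ℤ Γ) (g : G),
      ∃ β', L β * MonoidAlgebra.of ℤ G g = L β' := by
    intro β g
    have hg : g ∈ (Γ : Set G) * (H : Set G) := by
      rw [← Subgroup.normal_mul, hsup]
      simp
    obtain ⟨γ₀, hγ₀, h, hh, rfl⟩ := hg
    obtain ⟨m, hm⟩ := hDpsi h⁻¹
    refine ⟨m * DD Γ h⁻¹ (β * MonoidAlgebra.of ℤ Γ ⟨γ₀, hγ₀⟩), ?_⟩
    calc L β * MonoidAlgebra.of ℤ G (γ₀ * h)
        = normElt H * (phiH Γ (ψbar * β)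
            * (MonoidAlgebra.of ℤ G γ₀ * MonoidAlgebra.of ℤ G h)) := by
          rw [hL, e0, map_mul (MonoidAlgebra.of ℤ G), mul_assoc]
      _ = normElt H * (phiH Γ (ψbar * (β * MonoidAlgebra.of ℤ Γ ⟨γ₀, hγ₀⟩))
            * MonoidAlgebra.of ℤ G h) := by
          rw [← mul_assoc (phiH Γ (ψbar * β)), ← phiH_of Γ ⟨γ₀, hγ₀⟩, ← map_mul,
            mul_assoc ψbar]
      _ = normElt H * (MonoidAlgebra.of ℤ G h
            * phiH Γ (DD Γ h⁻¹ (ψbar * (β * MonoidAlgebra.of ℤ Γ ⟨γ₀, hγ₀⟩)))) := by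
          rw [phiH_mul_of]
      _ = normElt H
            * phiH Γ (ψbar * (m * DD Γ h⁻¹ (β * MonoidAlgebra.of ℤ Γ ⟨γ₀, hγ₀⟩))) := by
          rw [← mul_assoc, normElt_absorb H hh, map_mul (DD Γ h⁻¹), hm,
            mul_assoc ψbar]
      _ = L (m * DD Γ h⁻¹ (β * MonoidAlgebra.of ℤ Γ ⟨γ₀, hγ₀⟩)) := by
          rw [hL, e0]
  constructor
  · -- right ideal
    ext z
    simp only [Set.mem_setOf_eq]
    constructor
    · rintro ⟨x, hx, a, rfl⟩
      rw [hJL] at hx ⊢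
      obtain ⟨β, rfl⟩ := hx
      induction a using MonoidAlgebra.induction_linear with
      | zero => exact ⟨0, by rw [map_zero, mul_zero]⟩
      | add u v hu hv =>
        obtain ⟨β₁, h1⟩ := hu
        obtain ⟨β₂, h2⟩ := hv
        exact ⟨β₁ + β₂, by rw [map_add, h1, h2, mul_add]⟩
      | single g b =>
        obtain ⟨β', hβ'⟩ := hstep β g
        refine ⟨b • β', ?_⟩
        have hsingle : (MonoidAlgebra.single g b : MonoidAlgebra ℤ G)
            = b • MonoidAlgebra.of ℤ G g := by
          rw [MonoidAlgebra.of_apply, MonoidAlgebra.smul_single, smul_eq_mul, mul_one]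
        rw [map_smul, ← hβ', hsingle, mul_smul_comm]
    · intro hz
      exact ⟨z, hz, 1, (mul_one z).symm⟩
  · -- saturated
    have hspan : Submodule.span ℤ J = LinearMap.range L := by
      rw [hJL, ← LinearMap.coe_range, Submodule.span_eq]
    rw [hspan]
    have hexp : ∀ β, L β
        = ∑ h ∈ Hfin, phiH Γ (DD Γ h (ψbar * β)) * MonoidAlgebra.of ℤ G h := by
      intro β
      rw [hL, e0, normElt_eq_sum, Finset.sum_mul]
      exact Finset.sum_congr rfl fun h _ => of_mul_phiH Γ h (ψbar * β)
    have hcoord : ∀ β (h : G), h ∈ H →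
        piH Γ (L β * MonoidAlgebra.of ℤ G h⁻¹) = DD Γ h (ψbar * β) := by
      intro β h hh
      rw [hexp, Finset.sum_mul, map_sum]
      rw [Finset.sum_eq_single_of_mem h ((hHfin h).2 hh)]
      · rw [mul_assoc, ← map_mul (MonoidAlgebra.of ℤ G), mul_inv_cancel, map_one,
          mul_one, piH_phiH]
      · intro h' hmem hne
        rw [mul_assoc, ← map_mul (MonoidAlgebra.of ℤ G)]
        apply piH_phiH_mul_of
        intro hcon
        have h3 : h' * h⁻¹ ∈ H := mul_mem ((hHfin h').1 hmem) (inv_mem hh)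
        have h4 : h' * h⁻¹ ∈ Γ ⊓ H := ⟨hcon, h3⟩
        rw [hinf, Subgroup.mem_bot] at h4
        exact hne (by
          have := congrArg (· * h) h4
          simpa [inv_mul_cancel_right] using this)
    refine ⟨fun {c x} hcx => ?_⟩
    obtain ⟨α, rfl⟩ := Submodule.Quotient.mk_surjective _ x
    by_cases hc : c = 0
    · exact Or.inl hc
    right
    have hmemL : c • α ∈ LinearMap.range L := by
      rw [← Submodule.Quotient.mk_eq_zero]
      rwa [← Submodule.Quotient.mk_smul] at hcx
    obtain ⟨β, hβ⟩ := hmemL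
    have hc1 : c • piH Γ α = ψbar * β := by
      have h1 := hcoord β 1 (one_mem H)
      rw [hβ, DD_one, inv_one, show MonoidAlgebra.of ℤ G (1 : G) = 1 from map_one _,
        mul_one, map_smul] at h1
      exact h1
    have hψo : Polynomial.aeval (MonoidAlgebra.of ℤ Γ τΓ) (PsiPoly (orderOf τΓ)) = ψbar := by
      rw [horderτΓ]
    obtain ⟨β', hβ'⟩ := aeval_sat τΓ hgen hc (piH Γ α) β (by rw [hψo]; exact hc1)
    rw [hψo] at hβ'
    have hψβ : ψbar * β = c • (ψbar * β') := by rw [← hc1, hβ']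
    have hcancel : ∀ u v : MonoidAlgebra ℤ Γ, c • u = c • v → u = v := by
      intro u v huv
      ext γ
      have h5 := congrArg (fun w : MonoidAlgebra ℤ Γ => w.coeff γ) huv
      simp only [MonoidAlgebra.coeff_smul, Finsupp.smul_apply, smul_eq_mul] at h5
      exact mul_left_cancel₀ hc h5
    have hcoordall : ∀ h : G, h ∈ H →
        piH Γ (α * MonoidAlgebra.of ℤ G h⁻¹) = DD Γ h (ψbar * β') := by
      intro h hh
      apply hcancel
      have h1 := hcoord β h hh
      rw [hβ, smul_mul_assoc, map_smul] at h1
      rw [h1, hψβ, map_zsmul]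
    rw [Submodule.Quotient.mk_eq_zero]
    refine ⟨β', ?_⟩
    rw [hexp]
    conv_rhs => rw [recon Γ H hinf hsup α]
    exact Finset.sum_congr rfl fun h hmem => by
      rw [hcoordall h ((hHfin h).1 hmem)]

end
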